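/- arXiv:1903.04327 — 3 statements merged into one kernel-verified Lean document; each statement's English description precedes it below -/
import Mathlib

section
/- Let Q be a connected quiver, c: C → Q a universal cover (a tree-shaped cover) and d: D → Q any cover. Then there exists a morphism of quivers p: C → D with d ∘ p = c. -/
/-- A quiver: a set of vertices, a set of arrows, and source/target maps. -/
structure Quiv where
  V : Type
  A : Type
  s : A → V
  t : A → V

namespace Quiv

variable (Q : Quiv)

/-- A step in the double quiver of `Q`: an arrow together with an orientation
(`true` = the arrow itself, `false` = its formal inverse). -/
abbrev Step := Q.A × Bool

/-- Source of a step of the double quiver. -/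
def src (e : Q.Step) : Q.V := if e.2 then Q.s e.1 else Q.t e.1

/-- Target of a step of the double quiver. -/
def tgt (e : Q.Step) : Q.V := if e.2 then Q.t e.1 else Q.s e.1

/-- `Q.IsWalk i j l` : the list of steps `l` is an unoriented path
(a path in the double quiver) from `i` to `j`. -/
def IsWalk : Q.V → Q.V → List Q.Step → Prop
  | i, j, [] => i = j
  | i, j, e :: l => Q.src e = i ∧ IsWalk (Q.tgt e) j l

/-- A quiver is connected if any two vertices are joined by an unoriented path. -/
def Connected : Prop := ∀ i j : Q.V, ∃ l, Q.IsWalk i j l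

/-- An unoriented path is reduced if it has positive length and contains no
subword of the form `α α⁻¹` or `α⁻¹ α`. -/
def Reduced (l : List Q.Step) : Prop :=
  l ≠ [] ∧ l.Chain' fun e f => ¬(e.1 = f.1 ∧ e.2 = !f.2)

/-- A quiver is tree-shaped if it is connected and has no reduced unoriented cycles. -/
def TreeShaped : Prop :=
  Q.Connected ∧ ∀ (i : Q.V) (l : List Q.Step), Q.IsWalk i i l → ¬ Q.Reduced l

end Quiv

/-- A morphism of quivers. -/
structure QuivHom (C Q : Quiv) where
  v : C.V → Q.V
  a : C.A → Q.A
  hs : ∀ b, Q.s (a b) = v (C.s b)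
  ht : ∀ b, Q.t (a b) = v (C.t b)

/-- A morphism of quivers is a cover if it is surjective on vertices and arrows
and induces bijections between the arrows starting (resp. ending) at any vertex `x`
and the arrows starting (resp. ending) at its image. -/
def QuivHom.IsCover {C Q : Quiv} (c : QuivHom C Q) : Prop :=
  Function.Surjective c.v ∧ Function.Surjective c.a ∧
    ∀ x : C.V,
      Set.BijOn c.a {b | C.s b = x} {α | Q.s α = c.v x} ∧
      Set.BijOn c.a {b | C.t b = x} {α | Q.t α = c.v x}

/-!
Lifting unoriented paths of `Q` step by step along the cover `d` sends a path and its
reduction (cancelling a pair `α α⁻¹`) to the same endpoint. Since `C` has no reduced cycles,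
every closed path of `C` reduces to the empty path, so its image in `Q` lifts to a closed
path of `D`. Hence, after fixing `x₀ ∈ C` and `y₀ ∈ D` over the same vertex, the endpoint of
the lift through `y₀` of the image of any path from `x₀` to `x` depends only on `x`; this is
`p x`, and arrows are then lifted at their sources.
-/

namespace Quiv

variable {Q : Quiv}

def IsAcyclic (Q : Quiv) : Prop := ∀ (i : Q.V) (l : List Q.Step), Q.IsWalk i i l → ¬ Q.Reduced l

theorem TreeShaped.isAcyclic (hQ : Q.TreeShaped) : Q.IsAcyclic := hQ.2

def flip (e : Q.Step) : Q.Step := (e.1, !e.2)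

@[simp] theorem src_flip (e : Q.Step) : Q.src (flip e) = Q.tgt e := by
  cases h : e.2 <;> simp [flip, src, tgt, h]

@[simp] theorem tgt_flip (e : Q.Step) : Q.tgt (flip e) = Q.src e := by
  cases h : e.2 <;> simp [flip, src, tgt, h]

@[simp] theorem flip_flip (e : Q.Step) : flip (flip e) = e := by
  simp [flip]

def reverse (l : List Q.Step) : List Q.Step := (l.map flip).reverse

@[simp] theorem reverse_reverse (l : List Q.Step) : reverse (reverse l) = l := by
  simp [reverse, List.map_reverse, Function.comp_def]

@[simp] theorem isWalk_nil {i j : Q.V} : Q.IsWalk i j [] ↔ i = j := Iff.rfl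

@[simp] theorem isWalk_cons {i j : Q.V} {e : Q.Step} {l : List Q.Step} :
    Q.IsWalk i j (e :: l) ↔ Q.src e = i ∧ Q.IsWalk (Q.tgt e) j l := Iff.rfl

theorem isWalk_append_iff {i k : Q.V} {l₁ l₂ : List Q.Step} :
    Q.IsWalk i k (l₁ ++ l₂) ↔ ∃ j, Q.IsWalk i j l₁ ∧ Q.IsWalk j k l₂ := by
  induction l₁ generalizing i with
  | nil => simp
  | cons e l ih => simp [ih, and_assoc]

theorem IsWalk.append {i j k : Q.V} {l₁ l₂ : List Q.Step}
    (h₁ : Q.IsWalk i j l₁) (h₂ : Q.IsWalk j k l₂) : Q.IsWalk i k (l₁ ++ l₂) :=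
  isWalk_append_iff.2 ⟨j, h₁, h₂⟩

theorem IsWalk.reverse {i j : Q.V} {l : List Q.Step} (h : Q.IsWalk i j l) :
    Q.IsWalk j i (Quiv.reverse l) := by
  induction l generalizing i with
  | nil => exact h.symm
  | cons e l ih =>
    obtain ⟨rfl, h⟩ := h
    simpa [Quiv.reverse] using (ih h).append (by simp : Q.IsWalk (Q.tgt e) (Q.src e) [flip e])

theorem IsWalk.cancel {i j : Q.V} {l₁ l₂ : List Q.Step} {e : Q.Step}
    (h : Q.IsWalk i j (l₁ ++ e :: flip e :: l₂)) : Q.IsWalk i j (l₁ ++ l₂) := by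
  obtain ⟨k, h₁, rfl, -, h₂⟩ := isWalk_append_iff.1 h
  exact h₁.append (by simpa using h₂)

theorem exists_eq_cancel_of_not_reduced {l : List Q.Step} (hl : l ≠ []) (h : ¬ Q.Reduced l) :
    ∃ l₁ e l₂, l = l₁ ++ e :: flip e :: l₂ := by
  change ¬ (l ≠ [] ∧ l.IsChain _) at h
  simp only [List.isChain_iff_forall_rel_of_append_cons_cons] at h
  push Not at h
  obtain ⟨a, b, l₁, l₂, rfl, h₁, h₂⟩ := h hl
  exact ⟨l₁, a, l₂, by simp [flip, h₁, h₂]⟩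

theorem closedWalk_induction (hQ : Q.IsAcyclic) {i : Q.V}
    {P : List Q.Step → Prop} (nil : P [])
    (cancel : ∀ l₁ e l₂, Q.IsWalk i i (l₁ ++ e :: flip e :: l₂) →
      P (l₁ ++ l₂) → P (l₁ ++ e :: flip e :: l₂))
    {l : List Q.Step} (hl : Q.IsWalk i i l) : P l := by
  induction h : l.length using Nat.strong_induction_on generalizing l with
  | _ n ih =>
    rcases eq_or_ne l [] with rfl | hne
    · exact nil
    obtain ⟨l₁, e, l₂, rfl⟩ := exists_eq_cancel_of_not_reduced hne (hQ i _ hl)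
    exact cancel l₁ e l₂ hl (ih _ (by simp at h ⊢; omega) hl.cancel rfl)

end Quiv

namespace QuivHom

variable {C D Q : Quiv}

def mapStep (f : QuivHom C Q) (e : C.Step) : Q.Step := (f.a e.1, e.2)

def mapWalk (f : QuivHom C Q) (l : List C.Step) : List Q.Step := l.map f.mapStep

variable (f : QuivHom C Q)

@[simp] theorem src_mapStep (e : C.Step) : Q.src (f.mapStep e) = f.v (C.src e) := by
  cases h : e.2 <;> simp [mapStep, Quiv.src, h, f.hs, f.ht]

@[simp] theorem tgt_mapStep (e : C.Step) : Q.tgt (f.mapStep e) = f.v (C.tgt e) := by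
  cases h : e.2 <;> simp [mapStep, Quiv.tgt, h, f.hs, f.ht]

@[simp] theorem mapStep_flip (e : C.Step) : f.mapStep (Quiv.flip e) = Quiv.flip (f.mapStep e) :=
  rfl

@[simp] theorem mapWalk_nil : f.mapWalk [] = [] := rfl

@[simp] theorem mapWalk_append (l₁ l₂ : List C.Step) :
    f.mapWalk (l₁ ++ l₂) = f.mapWalk l₁ ++ f.mapWalk l₂ :=
  List.map_append ..

@[simp] theorem mapWalk_cons (e : C.Step) (l : List C.Step) :
    f.mapWalk (e :: l) = f.mapStep e :: f.mapWalk l :=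
  rfl

@[simp] theorem mapWalk_reverse (l : List C.Step) :
    f.mapWalk (Quiv.reverse l) = Quiv.reverse (f.mapWalk l) := by
  simp [mapWalk, Quiv.reverse, List.map_reverse, Function.comp_def]

theorem _root_.Quiv.IsWalk.map {i j : C.V} {l : List C.Step} (h : C.IsWalk i j l) :
    Q.IsWalk (f.v i) (f.v j) (f.mapWalk l) := by
  induction l generalizing i with
  | nil => exact congrArg f.v h
  | cons e l ih =>
    obtain ⟨rfl, h⟩ := h
    simpa using ih h

end QuivHom

namespace QuivHom.IsCover

variable {D Q : Quiv} {d : QuivHom D Q}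

theorem eq_of_src_eq_of_mapStep_eq (hd : d.IsCover) {e₁ e₂ : D.Step} (hsrc : D.src e₁ = D.src e₂)
    (h : d.mapStep e₁ = d.mapStep e₂) : e₁ = e₂ := by
  obtain ⟨ha, hb⟩ := Prod.ext_iff.1 h
  obtain ⟨a₁, b⟩ := e₁
  obtain ⟨a₂, b⟩ := e₂
  simp only [mapStep] at ha hb
  subst hb
  cases b
  · exact congrArg (·, false) <| (hd.2.2 (D.t a₂)).2.2.1 hsrc rfl ha
  · exact congrArg (·, true) <| (hd.2.2 (D.s a₂)).1.2.1 hsrc rfl ha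

theorem exists_s_eq (hd : d.IsCover) {y : D.V} {α : Q.A} (h : Q.s α = d.v y) :
    ∃ a, D.s a = y ∧ d.a a = α :=
  (hd.2.2 y).1.2.2 h

theorem exists_t_eq (hd : d.IsCover) {y : D.V} {α : Q.A} (h : Q.t α = d.v y) :
    ∃ a, D.t a = y ∧ d.a a = α :=
  (hd.2.2 y).2.2.2 h

theorem exists_mapStep_eq (hd : d.IsCover) {y : D.V} {e : Q.Step} (h : Q.src e = d.v y) :
    ∃ e' : D.Step, D.src e' = y ∧ d.mapStep e' = e := by
  obtain ⟨α, b⟩ := e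
  cases b
  · obtain ⟨a, ha, rfl⟩ := hd.exists_t_eq h
    exact ⟨(a, false), ha, rfl⟩
  · obtain ⟨a, ha, rfl⟩ := hd.exists_s_eq h
    exact ⟨(a, true), ha, rfl⟩

end QuivHom.IsCover

namespace QuivHom

variable {C D Q : Quiv} {d : QuivHom D Q}

open Classical in
/-- The endpoint of the lift of `e` starting at `y` (junk value `y` if there is none). -/
noncomputable def stepEnd (d : QuivHom D Q) (y : D.V) (e : Q.Step) : D.V :=
  if h : ∃ e' : D.Step, D.src e' = y ∧ d.mapStep e' = e then D.tgt h.choose else y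

noncomputable def liftEnd (d : QuivHom D Q) (y : D.V) (l : List Q.Step) : D.V :=
  l.foldl d.stepEnd y

@[simp] theorem liftEnd_nil (y : D.V) : d.liftEnd y [] = y := rfl

@[simp] theorem liftEnd_cons (y : D.V) (e : Q.Step) (l : List Q.Step) :
    d.liftEnd y (e :: l) = d.liftEnd (d.stepEnd y e) l := rfl

@[simp] theorem liftEnd_append (y : D.V) (l₁ l₂ : List Q.Step) :
    d.liftEnd y (l₁ ++ l₂) = d.liftEnd (d.liftEnd y l₁) l₂ :=
  List.foldl_append ..

theorem stepEnd_mapStep (hd : d.IsCover) (e : D.Step) :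
    d.stepEnd (D.src e) (d.mapStep e) = D.tgt e := by
  have h : ∃ e' : D.Step, D.src e' = D.src e ∧ d.mapStep e' = d.mapStep e := ⟨e, rfl, rfl⟩
  rw [stepEnd, dif_pos h, hd.eq_of_src_eq_of_mapStep_eq h.choose_spec.1 h.choose_spec.2]

theorem v_stepEnd (hd : d.IsCover) {y : D.V} {e : Q.Step} (h : Q.src e = d.v y) :
    d.v (d.stepEnd y e) = Q.tgt e := by
  obtain ⟨e', rfl, rfl⟩ := hd.exists_mapStep_eq h
  rw [stepEnd_mapStep hd, tgt_mapStep]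

theorem stepEnd_flip (hd : d.IsCover) {y : D.V} {e : Q.Step} (h : Q.src e = d.v y) :
    d.stepEnd (d.stepEnd y e) (Quiv.flip e) = y := by
  obtain ⟨e', rfl, rfl⟩ := hd.exists_mapStep_eq h
  rw [stepEnd_mapStep hd, ← Quiv.src_flip, ← mapStep_flip, stepEnd_mapStep hd, Quiv.tgt_flip]

theorem v_liftEnd (hd : d.IsCover) {y : D.V} {j : Q.V} {l : List Q.Step}
    (h : Q.IsWalk (d.v y) j l) : d.v (d.liftEnd y l) = j := by
  induction l generalizing y with
  | nil => exact h
  | cons e l ih => exact ih (v_stepEnd hd h.1 ▸ h.2)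

theorem liftEnd_reverse (hd : d.IsCover) {y : D.V} {j : Q.V} {l : List Q.Step}
    (h : Q.IsWalk (d.v y) j l) : d.liftEnd (d.liftEnd y l) (Quiv.reverse l) = y := by
  induction l generalizing y with
  | nil => rfl
  | cons e l ih =>
    simp only [Quiv.reverse, List.map_cons, List.reverse_cons, liftEnd_append, liftEnd_cons,
      liftEnd_nil] at ih ⊢
    rw [ih (v_stepEnd hd h.1 ▸ h.2), stepEnd_flip hd h.1]

theorem liftEnd_cancel (hd : d.IsCover) {y : D.V} {k : Q.V} {l₁ l₂ : List Q.Step} {e : Q.Step}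
    (h₁ : Q.IsWalk (d.v y) k l₁) (he : Q.src e = k) :
    d.liftEnd y (l₁ ++ e :: Quiv.flip e :: l₂) = d.liftEnd y (l₁ ++ l₂) := by
  rw [liftEnd_append, liftEnd_append, liftEnd_cons, liftEnd_cons,
    stepEnd_flip hd (he.trans (v_liftEnd hd h₁).symm)]

end QuivHom

section Lifting

variable {C D Q : Quiv} {c : QuivHom C Q} {d : QuivHom D Q}

theorem QuivHom.liftEnd_mapWalk_of_isWalk_self (hC : C.IsAcyclic) (hd : d.IsCover)
    {x₀ : C.V} {y₀ : D.V} (hy₀ : d.v y₀ = c.v x₀) {l : List C.Step} (hl : C.IsWalk x₀ x₀ l) :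
    d.liftEnd y₀ (c.mapWalk l) = y₀ := by
  refine Quiv.closedWalk_induction (P := fun l => d.liftEnd y₀ (c.mapWalk l) = y₀) hC rfl
    (fun l₁ e l₂ hl ih => ?_) hl
  obtain ⟨k, hl₁, rfl, -⟩ := Quiv.isWalk_append_iff.1 hl
  simp only [mapWalk_append, mapWalk_cons, mapStep_flip] at ih ⊢
  rwa [liftEnd_cancel hd (hy₀ ▸ hl₁.map c) (src_mapStep c e)]

theorem QuivHom.liftEnd_mapWalk_eq_of_isWalk (hC : C.IsAcyclic) (hd : d.IsCover)
    {x₀ x : C.V} {y₀ : D.V} (hy₀ : d.v y₀ = c.v x₀) {l l' : List C.Step}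
    (hl : C.IsWalk x₀ x l) (hl' : C.IsWalk x₀ x l') :
    d.liftEnd y₀ (c.mapWalk l) = d.liftEnd y₀ (c.mapWalk l') := by
  have hx : d.v (d.liftEnd y₀ (c.mapWalk l)) = c.v x := v_liftEnd hd (hy₀ ▸ hl.map c)
  symm
  calc d.liftEnd y₀ (c.mapWalk l')
      = d.liftEnd (d.liftEnd y₀ (c.mapWalk (l ++ Quiv.reverse l'))) (c.mapWalk l') := by
        rw [liftEnd_mapWalk_of_isWalk_self hC hd hy₀ (hl.append hl'.reverse)]
    _ = d.liftEnd (d.liftEnd (d.liftEnd y₀ (c.mapWalk l)) (Quiv.reverse (c.mapWalk l')))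
          (Quiv.reverse (Quiv.reverse (c.mapWalk l'))) := by
        simp
    _ = d.liftEnd y₀ (c.mapWalk l) := liftEnd_reverse hd (hx ▸ (hl'.map c).reverse)

theorem QuivHom.exists_lift_of_treeShaped (hC : C.TreeShaped) (hd : d.IsCover)
    {x₀ : C.V} {y₀ : D.V} (hy₀ : d.v y₀ = c.v x₀) :
    ∃ p : QuivHom C D, (∀ x, d.v (p.v x) = c.v x) ∧ (∀ b, d.a (p.a b) = c.a b) := by
  choose walk hwalk using hC.1 x₀
  set pv : C.V → D.V := fun x => d.liftEnd y₀ (c.mapWalk (walk x))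
  have pv_eq {x : C.V} {l : List C.Step} (hl : C.IsWalk x₀ x l) :
      pv x = d.liftEnd y₀ (c.mapWalk l) :=
    liftEnd_mapWalk_eq_of_isWalk hC.isAcyclic hd hy₀ (hwalk x) hl
  have v_pv (x : C.V) : d.v (pv x) = c.v x := v_liftEnd hd (hy₀ ▸ (hwalk x).map c)
  choose pa hpa_s hpa_a using fun b : C.A =>
    hd.exists_s_eq (show Q.s (c.a b) = d.v (pv (C.s b)) by rw [v_pv, c.hs])
  have hpa_t (b : C.A) : D.t (pa b) = pv (C.t b) := by
    have hb : C.IsWalk (C.s b) (C.t b) [(b, true)] := ⟨rfl, rfl⟩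
    calc D.t (pa b) = d.stepEnd (D.s (pa b)) (d.mapStep (pa b, true)) :=
          (stepEnd_mapStep hd (pa b, true)).symm
      _ = d.liftEnd (pv (C.s b)) (c.mapWalk [(b, true)]) := by
          simp [hpa_s b, mapStep, hpa_a b]
      _ = pv (C.t b) := by
          rw [pv_eq ((hwalk (C.s b)).append hb), mapWalk_append, liftEnd_append]
  exact ⟨⟨pv, pa, hpa_s, hpa_t⟩, v_pv, hpa_a⟩

end Lifting

theorem stmt1_general {C D Q : Quiv}
    (c : QuivHom C Q) (hC : C.TreeShaped)
    (d : QuivHom D Q) (hd : d.IsCover) :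
    ∃ p : QuivHom C D, (∀ x : C.V, d.v (p.v x) = c.v x) ∧ (∀ b : C.A, d.a (p.a b) = c.a b) := by
  rcases isEmpty_or_nonempty C.V with hV | ⟨⟨x₀⟩⟩
  · have : IsEmpty C.A := ⟨fun b => hV.false (C.s b)⟩
    exact ⟨⟨isEmptyElim, isEmptyElim, isEmptyElim, isEmptyElim⟩, isEmptyElim, isEmptyElim⟩
  · obtain ⟨y₀, hy₀⟩ := hd.1 (c.v x₀)
    exact QuivHom.exists_lift_of_treeShaped hC hd hy₀

/-- Let `Q` be a connected quiver, `c : C → Q` a universal cover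
(i.e. a cover with `C` tree-shaped) and `d : D → Q` any cover. Then there exists a
morphism of quivers `p : C → D` with `d ∘ p = c`. -/
theorem stmt1 {C D Q : Quiv} (hQ : Q.Connected)
    (c : QuivHom C Q) (hc : c.IsCover) (hC : C.TreeShaped)
    (d : QuivHom D Q) (hd : d.IsCover) :
    ∃ p : QuivHom C D, (∀ x : C.V, d.v (p.v x) = c.v x) ∧ (∀ b : C.A, d.a (p.a b) = c.a b) :=
  stmt1_general c hC d hd
end

section
/- Let Q be a quiver whose underlying graph is a tree, let l be a sink of Q which is a leaf (exactly one arrow β: k → l is adjacent to l), and let Q' be the full subquiver on Q₀ ∖ {l}. If M is a finite-dimensional representation of Q with Ext¹_Q(M,M) = 0, then the restriction M' of M to Q' satisfies Ext¹_{Q'}(M',M') = 0. -/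
/-- A representation of the quiver `Q` over the field `k`: a vector space for every
vertex and a linear map for every arrow. -/
structure QRep (k : Type) [Field k] (Q : Quiv) where
  carrier : Q.V → Type
  [acg : ∀ i, AddCommGroup (carrier i)]
  [mod : ∀ i, Module k (carrier i)]
  map : ∀ a : Q.A, carrier (Q.s a) →ₗ[k] carrier (Q.t a)

attribute [instance] QRep.acg QRep.mod

namespace QRep

variable {k : Type} [Field k] {Q : Quiv}

/-- The space `Hom_Q(M,N)` of morphisms of representations, realized as a subspace of
`⊕_{i ∈ Q₀} Hom_k(M_i, N_i)`. -/
def homSet (M N : QRep k Q) : Submodule k (∀ i, M.carrier i →ₗ[k] N.carrier i) where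
  carrier := {f | ∀ a : Q.A, N.map a ∘ₗ f (Q.s a) = f (Q.t a) ∘ₗ M.map a}
  add_mem' := by
    intro f g hf hg a
    simp only [Pi.add_apply, LinearMap.comp_add, LinearMap.add_comp, hf a, hg a]
  zero_mem' := by intro a; simp
  smul_mem' := by
    intro c f hf a
    simp only [Pi.smul_apply, LinearMap.comp_smul, LinearMap.smul_comp, hf a]

/-- The map `φ : ⊕_i Hom(M_i,N_i) → ⊕_{α} Hom(M_{s(α)}, N_{t(α)})`,
`φ((f_i)_i) = (N_α ∘ f_{s(α)} − f_{t(α)} ∘ M_α)_α`, arising from the standard projective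
resolution of `M`. -/
def extMap (M N : QRep k Q) :
    (∀ i, M.carrier i →ₗ[k] N.carrier i) →ₗ[k]
      (∀ a : Q.A, M.carrier (Q.s a) →ₗ[k] N.carrier (Q.t a)) where
  toFun f := fun a => N.map a ∘ₗ f (Q.s a) - f (Q.t a) ∘ₗ M.map a
  map_add' f g := by
    funext a
    simp only [Pi.add_apply, LinearMap.comp_add, LinearMap.add_comp]
    abel
  map_smul' c f := by
    funext a
    simp only [Pi.smul_apply, LinearMap.comp_smul, LinearMap.smul_comp, RingHom.id_apply,
      smul_sub]

/-- The extension group `Ext¹_Q(M,N)`, realized as the cokernel of `extMap M N`;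
by the standard projective resolution of `M` this is the first extension group in the
category of representations of `Q`. -/
def Ext1 (M N : QRep k Q) :=
  (∀ a : Q.A, M.carrier (Q.s a) →ₗ[k] N.carrier (Q.t a)) ⧸ LinearMap.range (extMap M N)

noncomputable instance (M N : QRep k Q) : AddCommGroup (Ext1 M N) :=
  inferInstanceAs (AddCommGroup ((∀ _a : Q.A, _ →ₗ[k] _) ⧸ LinearMap.range (extMap M N)))

noncomputable instance (M N : QRep k Q) : Module k (Ext1 M N) :=
  inferInstanceAs (Module k ((∀ _a : Q.A, _ →ₗ[k] _) ⧸ LinearMap.range (extMap M N)))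

end QRep
namespace Quiv

/-- The full subquiver of `Q` on the complement of the vertex `l`: its arrows are the
arrows of `Q` with both endpoints different from `l`. -/
def deleteVertex (Q : Quiv) (l : Q.V) : Quiv where
  V := {v : Q.V // v ≠ l}
  A := {a : Q.A // Q.s a ≠ l ∧ Q.t a ≠ l}
  s := fun a => ⟨Q.s a.1, a.2.1⟩
  t := fun a => ⟨Q.t a.1, a.2.2⟩

end Quiv

namespace QRep

variable {k : Type} [Field k] {Q : Quiv}

/-- The restriction `M'` of a representation `M` of `Q` to the full subquiver obtained
by deleting the vertex `l`: one forgets the space at `l` and the maps adjacent to `l`. -/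
def restrict (M : QRep k Q) (l : Q.V) : QRep k (Q.deleteVertex l) where
  carrier v := M.carrier v.1
  map a := M.map a.1

end QRep

/-!
`Ext1 M N` is the cokernel of `extMap M N`, and `extMap` commutes with restriction to the full
subquiver `Q ∖ {l}`. Any family of maps on the arrows of `Q ∖ {l}` extends by zero to the arrows
of `Q`, so `Ext¹_Q(M,N)` surjects onto `Ext¹(M',N')`; in particular rigidity passes to `M'`.
-/

namespace QRep

variable {k : Type} [Field k] {Q : Quiv}

theorem subsingleton_ext1_iff_surjective (M N : QRep k Q) :
    Subsingleton (Ext1 M N) ↔ Function.Surjective (extMap M N) := by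
  rw [← LinearMap.range_eq_top]
  exact Submodule.Quotient.subsingleton_iff

theorem extMap_restrict (M N : QRep k Q) (l : Q.V) (f : ∀ i, M.carrier i →ₗ[k] N.carrier i)
    (a : (Q.deleteVertex l).A) :
    extMap (M.restrict l) (N.restrict l) (fun v => f v.1) a = extMap M N f a.1 :=
  rfl

theorem surjective_extMap_restrict {M N : QRep k Q} (l : Q.V)
    (h : Function.Surjective (extMap M N)) :
    Function.Surjective (extMap (M.restrict l) (N.restrict l)) := by
  classical
  intro g
  obtain ⟨f, hf⟩ := h fun a => if ha : Q.s a ≠ l ∧ Q.t a ≠ l then g ⟨a, ha⟩ else 0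
  refine ⟨fun v => f v.1, funext fun a => ?_⟩
  rw [extMap_restrict, hf]
  exact dif_pos a.2

theorem subsingleton_ext1_restrict {M N : QRep k Q} (l : Q.V) [Subsingleton (Ext1 M N)] :
    Subsingleton (Ext1 (M.restrict l) (N.restrict l)) :=
  (subsingleton_ext1_iff_surjective _ _).mpr <|
    surjective_extMap_restrict l <| (subsingleton_ext1_iff_surjective M N).mp ‹_›

end QRep

open QRep in
theorem stmt8_general {k : Type} [Field k] {Q : Quiv}
    (β : Q.A)
    (M : QRep k Q)
    (hrigid : Subsingleton (Ext1 M M)) :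
    Subsingleton (Ext1 (M.restrict (Q.t β)) (M.restrict (Q.t β))) :=
  subsingleton_ext1_restrict (Q.t β)

open QRep in
/-- Let `Q` be a quiver whose underlying graph is a tree, `l` a sink of
`Q` which is a leaf, with unique adjacent arrow `β : k → l` (here `l = Q.t β`), and `Q'`
the full subquiver on `Q₀ ∖ {l}`.  If `M` is a finite-dimensional representation of `Q`
with `Ext¹_Q(M,M) = 0`, then the restriction `M'` of `M` to `Q'` satisfies
`Ext¹_{Q'}(M',M') = 0`. -/
theorem stmt8 {k : Type} [Field k] [IsAlgClosed k] {Q : Quiv}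
    (htree : Q.TreeShaped) (β : Q.A)
    (hsink : ∀ a : Q.A, Q.s a ≠ Q.t β)
    (hleaf : ∀ a : Q.A, Q.t a = Q.t β → a = β)
    (M : QRep k Q) [∀ i, FiniteDimensional k (M.carrier i)]
    (hrigid : Subsingleton (Ext1 M M)) :
    Subsingleton (Ext1 (M.restrict (Q.t β)) (M.restrict (Q.t β))) :=
  stmt8_general β M hrigid
end

section
/- Let Q be a quiver with a sink l that is a leaf with unique adjacent arrow β: k → l, let M be a representation of Q, and let M'' be the quotient of M by the subrepresentation S(l) ⊗ M_l (so M'' agrees with M away from l and M''_l = 0). If Ext¹_Q(M,M) = 0 then Ext¹_Q(M'',M'') = 0. -/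
/-!
`Ext¹(M, M)` is the cokernel of `φ = extMap M M`, so rigidity means that `φ` is onto. Killing the
vertex `l` does not destroy this: choosing vertexwise sections `σ` of `π`, a family `g''` lifts to
`g = σ ∘ g'' ∘ π`; a preimage `f` of `g` under `φ` pushes down to `f'' = π ∘ f ∘ σ`, because `π` is
invertible away from `l` and `M''_l = 0`; and naturality of `φ` in morphisms shows `φ(f'') = g''`.
-/

namespace QRep

variable {k : Type} [Field k] {Q : Quiv}

theorem subsingleton_Ext1_iff {M N : QRep k Q} :
    Subsingleton (Ext1 M N) ↔ Function.Surjective (extMap M N) :=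
  Submodule.Quotient.subsingleton_iff.trans LinearMap.range_eq_top

theorem extMap_comp_eq_comp_extMap {M N M' N' : QRep k Q}
    {π : ∀ i, M.carrier i →ₗ[k] M'.carrier i} {ρ : ∀ i, N.carrier i →ₗ[k] N'.carrier i}
    (hπ : π ∈ homSet M M') (hρ : ρ ∈ homSet N N')
    {f : ∀ i, M.carrier i →ₗ[k] N.carrier i} {f' : ∀ i, M'.carrier i →ₗ[k] N'.carrier i}
    (hf : ∀ i, ρ i ∘ₗ f i = f' i ∘ₗ π i) (a : Q.A) :
    extMap M' N' f' a ∘ₗ π (Q.s a) = ρ (Q.t a) ∘ₗ extMap M N f a := by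
  change (N'.map a ∘ₗ f' (Q.s a) - f' (Q.t a) ∘ₗ M'.map a) ∘ₗ π (Q.s a) =
    ρ (Q.t a) ∘ₗ (N.map a ∘ₗ f (Q.s a) - f (Q.t a) ∘ₗ M.map a)
  rw [LinearMap.sub_comp, LinearMap.comp_sub]
  congr 1
  · rw [LinearMap.comp_assoc, ← hf, ← LinearMap.comp_assoc, hρ a, LinearMap.comp_assoc]
  · rw [LinearMap.comp_assoc, hπ a, ← LinearMap.comp_assoc, ← hf, LinearMap.comp_assoc]

theorem _root_.LinearMap.comp_comp_eq_of_bijective_or_subsingleton {V W : Type*}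
    [AddCommGroup V] [Module k V] [AddCommGroup W] [Module k W]
    {p : V →ₗ[k] W} {σ : W →ₗ[k] V} (hσ : p ∘ₗ σ = LinearMap.id)
    (hp : Function.Bijective p ∨ Subsingleton W) (f : V →ₗ[k] W) : f ∘ₗ σ ∘ₗ p = f := by
  rcases hp with hbij | hW
  · have hσp : σ ∘ₗ p = LinearMap.id := LinearMap.ext fun x =>
      hbij.injective (LinearMap.congr_fun hσ (p x))
    rw [hσp, LinearMap.comp_id]
  · exact LinearMap.ext fun _ => Subsingleton.elim _ _

theorem extMap_surjective_of_bijective_or_subsingleton {M N : QRep k Q}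
    {π : ∀ i, M.carrier i →ₗ[k] N.carrier i} (hπ : π ∈ homSet M N)
    (hπN : ∀ i, Function.Bijective (π i) ∨ Subsingleton (N.carrier i))
    (hM : Function.Surjective (extMap M M)) : Function.Surjective (extMap N N) := by
  have hsurj : ∀ i, Function.Surjective (π i) := fun i =>
    (hπN i).elim (·.2) fun _ _ => ⟨0, Subsingleton.elim _ _⟩
  choose σ hσ using fun i =>
    (π i).exists_rightInverse_of_surjective (LinearMap.range_eq_top.mpr (hsurj i))
  intro g
  obtain ⟨f, hf⟩ := hM fun a => σ (Q.t a) ∘ₗ g a ∘ₗ π (Q.s a)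
  refine ⟨fun i => π i ∘ₗ f i ∘ₗ σ i, funext fun a => ?_⟩
  have hdescend : ∀ i, π i ∘ₗ f i = (π i ∘ₗ f i ∘ₗ σ i) ∘ₗ π i := fun i => by
    simpa only [LinearMap.comp_assoc] using
      (LinearMap.comp_comp_eq_of_bijective_or_subsingleton (hσ i) (hπN i) (π i ∘ₗ f i)).symm
  have hnat := extMap_comp_eq_comp_extMap hπ hπ hdescend a
  rw [hf, ← LinearMap.comp_assoc, hσ, LinearMap.id_comp] at hnat
  exact (LinearMap.cancel_right (hsurj (Q.s a))).mp hnat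

end QRep

open QRep in
theorem stmt9_general {k : Type} [Field k] {Q : Quiv} (β : Q.A)
    (M M'' : QRep k Q)
    (π : ∀ i, M.carrier i →ₗ[k] M''.carrier i) (hπ : π ∈ homSet M M'')
    (hbij : ∀ i, i ≠ Q.t β → Function.Bijective (π i))
    (hzero : Subsingleton (M''.carrier (Q.t β)))
    (hrigid : Subsingleton (Ext1 M M)) :
    Subsingleton (Ext1 M'' M'') := by
  rw [subsingleton_Ext1_iff] at hrigid ⊢
  refine extMap_surjective_of_bijective_or_subsingleton hπ (fun i => ?_) hrigid
  rcases eq_or_ne i (Q.t β) with rfl | hi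
  · exact Or.inr hzero
  · exact Or.inl (hbij i hi)

open QRep in
/-- Let `Q` be a quiver with a sink `l` that is a leaf with unique
adjacent arrow `β : k → l` (here `l = Q.t β`), `M` a representation of `Q` and `M''` the
quotient of `M` by the subrepresentation `S(l) ⊗ M_l`, i.e. (characterized up to
isomorphism) `M''` comes with a surjective morphism `π : M → M''` which is bijective away
from `l` and `M''_l = 0`.  If `Ext¹_Q(M,M) = 0` then `Ext¹_Q(M'',M'') = 0`. -/
theorem stmt9 {k : Type} [Field k] [IsAlgClosed k] {Q : Quiv} (β : Q.A)
    (hsink : ∀ a : Q.A, Q.s a ≠ Q.t β)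
    (hleaf : ∀ a : Q.A, Q.t a = Q.t β → a = β)
    (M M'' : QRep k Q)
    [∀ i, FiniteDimensional k (M.carrier i)] [∀ i, FiniteDimensional k (M''.carrier i)]
    (π : ∀ i, M.carrier i →ₗ[k] M''.carrier i) (hπ : π ∈ homSet M M'')
    (hsurj : ∀ i, Function.Surjective (π i))
    (hbij : ∀ i, i ≠ Q.t β → Function.Bijective (π i))
    (hzero : Subsingleton (M''.carrier (Q.t β)))
    (hrigid : Subsingleton (Ext1 M M)) :
    Subsingleton (Ext1 M'' M'') :=
  stmt9_general β M M'' π hπ hbij hzero hrigid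
end
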